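/- For the greedy β-transformation T with β = (1+√5)/2 and digit set {0, 3, 4}, the measure ν on [0, 3) with density ψ with respect to Lebesgue measure, where ψ = β⁻¹·1_{[0, 3β−4)} + β⁻²·1_{[0, 3−β)} + β⁻³·1_{[0, 2β−1)} + 1_{[0, 1)} + β⁻¹·1_{[0, β)} + β⁻²·1_{[0, β²)} + β⁻³·1_{[0, β⁻³)} + β⁻⁴·1_{[0, β⁻²)} + β⁻³·1_{[0, β⁻¹)} + 1_{[0, 3)}, is a finite T-invariant measure: ν(T⁻¹E) = ν(E) for every Borel set E ⊆ [0, 3). Hence, after normalization, ν is the absolutely continuous invariant probability measure of T. -/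

import Mathlib

/-
Proof idea. A change of variables `y = βx - d` on each affine branch of `T` shows that
`ν(T⁻¹E) = ∫_E Lψ`, where `Lψ(y) = β⁻¹ Σ ψ(x)` over the preimages `x` of `y`; so it suffices that
`Lψ = ψ` on `[0, 3)`. There the preimages are `y/β`, `(y+3)/β` (only for `y < 1`) and `(y+4)/β`, and
`1_{[0,a)}` evaluated at them is `1_{[0,βa-d)}(y)`. These moves send the ten thresholds `a` of
`ψ` back into the same set, up to thresholds `≤ 0` or `≥ 3` (e.g. `β(3β-4) = 3-β`,
`β(2β-1) - 3 = β-1`), which makes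
`β ψ(y) = ψ(y/β) + 1_{y<1} ψ((y+3)/β) + ψ((y+4)/β)` an identity in `ℤ[β]`.
-/

open MeasureTheory Set
open scoped ENNReal

/-- The golden mean `β = (1+√5)/2`. -/
noncomputable def gb : ℝ := (1 + Real.sqrt 5) / 2

/-- The greedy β-transformation with `β = (1+√5)/2` and deleted digit set
`A = {0, 3, 4}`: `T x = βx` on `[0, 3/β)`, `T x = βx − 3` on `[3/β, 4/β)`,
and `T x = βx − 4` on `[4/β, 3)`. -/
noncomputable def Tg (x : ℝ) : ℝ :=
  if x < 3 / gb then gb * x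
  else if x < 4 / gb then gb * x - 3
  else gb * x - 4

/-- The density `ψ` of the invariant measure of `T` (up to normalization). -/
noncomputable def psi (x : ℝ) : ℝ :=
  (Set.Ico (0 : ℝ) (3 * gb - 4)).indicator (fun _ => gb⁻¹) x
  + (Set.Ico (0 : ℝ) (3 - gb)).indicator (fun _ => (gb ^ 2)⁻¹) x
  + (Set.Ico (0 : ℝ) (2 * gb - 1)).indicator (fun _ => (gb ^ 3)⁻¹) x
  + (Set.Ico (0 : ℝ) 1).indicator (fun _ => (1 : ℝ)) x
  + (Set.Ico (0 : ℝ) gb).indicator (fun _ => gb⁻¹) x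
  + (Set.Ico (0 : ℝ) (gb ^ 2)).indicator (fun _ => (gb ^ 2)⁻¹) x
  + (Set.Ico (0 : ℝ) ((gb ^ 3)⁻¹)).indicator (fun _ => (gb ^ 3)⁻¹) x
  + (Set.Ico (0 : ℝ) ((gb ^ 2)⁻¹)).indicator (fun _ => (gb ^ 4)⁻¹) x
  + (Set.Ico (0 : ℝ) (gb⁻¹)).indicator (fun _ => (gb ^ 3)⁻¹) x
  + (Set.Ico (0 : ℝ) 3).indicator (fun _ => (1 : ℝ)) x

/-- The measure `ν` on `[0, 3)` with density `ψ` with respect to Lebesgue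
measure. -/
noncomputable def nuMeas : Measure ℝ :=
  volume.withDensity fun x => ENNReal.ofReal (psi x)

theorem lintegral_comp_mul_sub {a : ℝ} (ha : a ≠ 0) (d : ℝ) {F : ℝ → ℝ≥0∞} (hF : Measurable F) :
    ∫⁻ x, F (a * x - d) = ENNReal.ofReal |a⁻¹| * ∫⁻ y, F y := by
  rw [← lintegral_map (f := fun y => F (y - d)) (by fun_prop) (measurable_const_mul a),
    Real.map_volume_mul_left ha, lintegral_smul_measure, lintegral_sub_right_eq_self, smul_eq_mul]

theorem lintegral_comp_mul_sub_mul {a : ℝ} (ha : a ≠ 0) (d : ℝ) {g h : ℝ → ℝ≥0∞}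
    (hg : Measurable g) (hh : Measurable h) :
    ∫⁻ x, g (a * x - d) * h x = ENNReal.ofReal |a⁻¹| * ∫⁻ y, g y * h ((y + d) / a) := by
  rw [← lintegral_comp_mul_sub ha d (by fun_prop)]
  congr with x
  rw [sub_add_cancel, mul_div_cancel_left₀ x ha]

lemma gb_sq : gb ^ 2 = gb + 1 := Real.goldenRatio_sq

lemma gb_pos : 0 < gb := Real.goldenRatio_pos

lemma gb_lt_two : gb < 2 := Real.goldenRatio_lt_two

lemma one_lt_gb : 1 < gb := Real.one_lt_goldenRatio

lemma three_halves_lt_gb : 3 / 2 < gb := by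
  nlinarith [gb_sq, one_lt_gb]

lemma inv_gb : gb⁻¹ = gb - 1 :=
  inv_eq_of_mul_eq_one_right (by linear_combination gb_sq)

lemma inv_gb_sq : (gb ^ 2)⁻¹ = 2 - gb :=
  inv_eq_of_mul_eq_one_right (by linear_combination (1 - gb) * gb_sq)

lemma inv_gb_pow_three : (gb ^ 3)⁻¹ = 2 * gb - 3 :=
  inv_eq_of_mul_eq_one_right (by linear_combination (2 * gb ^ 2 - gb + 1) * gb_sq)

lemma inv_gb_pow_four : (gb ^ 4)⁻¹ = 5 - 3 * gb :=
  inv_eq_of_mul_eq_one_right (by linear_combination (-3 * gb ^ 3 + 2 * gb ^ 2 - gb + 1) * gb_sq)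

noncomputable def box (a : ℝ) : ℝ → ℝ := (Ico 0 a).indicator 1

lemma box_of_nonneg {a y : ℝ} (hy : 0 ≤ y) : box a y = if y < a then 1 else 0 := by
  simp [box, indicator_apply, hy]

lemma box_eq_zero_of_le {a y : ℝ} (h : a ≤ y) : box a y = 0 := by
  simp [box, h]

lemma box_eq_one {a y : ℝ} (hy : 0 ≤ y) (h : y < a) : box a y = 1 := by
  rw [box_of_nonneg hy, if_pos h]

lemma box_add_div {a c d y : ℝ} (hc : 0 < c) (hd : 0 ≤ d) (hy : 0 ≤ y) :
    box a ((y + d) / c) = box (c * a - d) y := by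
  simp only [box_of_nonneg hy, box_of_nonneg (by positivity : 0 ≤ (y + d) / c), div_lt_iff₀ hc,
    ← lt_sub_iff_add_lt, mul_comm a]

lemma box_div {a c y : ℝ} (hc : 0 < c) (hy : 0 ≤ y) : box a (y / c) = box (c * a) y := by
  simpa using box_add_div (a := a) hc le_rfl hy

lemma psi_eq_sum_box : psi = fun x =>
    (gb - 1) * box (3 * gb - 4) x + (2 - gb) * box (3 - gb) x + (2 * gb - 3) * box (2 * gb - 1) x
    + box 1 x + (gb - 1) * box gb x + (2 - gb) * box (gb + 1) x
    + (2 * gb - 3) * box (2 * gb - 3) x + (5 - 3 * gb) * box (2 - gb) x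
    + (2 * gb - 3) * box (gb - 1) x + box 3 x := by
  funext x
  simp only [psi, inv_gb, inv_gb_sq, inv_gb_pow_three, inv_gb_pow_four]
  simp only [box, indicator_apply, Pi.one_apply, mul_ite, mul_one, mul_zero, gb_sq]

lemma psi_nonneg (x : ℝ) : 0 ≤ psi x := by
  have := gb_pos
  unfold psi
  repeat' apply add_nonneg
  all_goals exact indicator_nonneg (fun _ _ => by positivity) _

lemma measurable_psi : Measurable psi := by
  unfold psi
  fun_prop (disch := measurability)

lemma integrable_box (a : ℝ) : Integrable (box a) :=
  (integrableOn_const (by simp)).integrable_indicator measurableSet_Ico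

lemma integrable_psi : Integrable psi := by
  rw [psi_eq_sum_box]
  have := integrable_box
  fun_prop

lemma psi_transfer_eq {y : ℝ} (hy : 0 ≤ y) (hy3 : y < 3) :
    psi (y / gb) + (if y < 1 then psi ((y + 3) / gb) else 0) + psi ((y + 4) / gb) = gb * psi y := by
  have := three_halves_lt_gb
  have := gb_lt_two
  simp only [psi_eq_sum_box, box_div gb_pos hy, box_add_div gb_pos zero_le_three hy,
    box_add_div gb_pos zero_le_four hy]
  -- With `β² = β + 1` all thresholds `β a - d` and all coefficients lie in `ℤ + ℤβ`. The boxes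
  -- whose threshold is `≤ 0`, or clearly above `y`, become constants; what is left is an
  -- identity in `ℤ[β]`. (`simp` discharges at reducible transparency, where `linarith` fails.)
  ring_nf
  simp only [gb_sq]
  ring_nf
  split_ifs <;>
    simp (disch := with_unfolding_all linarith) only [box_eq_zero_of_le, box_eq_one] <;>
    ring_nf

lemma measurable_Tg : Measurable Tg := by
  unfold Tg
  exact Measurable.ite (measurableSet_lt measurable_id measurable_const) (by fun_prop)
    (Measurable.ite (measurableSet_lt measurable_id measurable_const) (by fun_prop) (by fun_prop))

/-- `β` times the Perron–Frobenius operator of `Tg`: the sum of `F` over the preimages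
`(y + d) / β` of `y` that lie in the branch of the digit `d ∈ {0, 3, 4}`. -/
noncomputable def transfer (F : ℝ → ℝ≥0∞) (y : ℝ) : ℝ≥0∞ :=
  (Iio (3 / gb)).indicator F (y / gb) + (Ico (3 / gb) (4 / gb)).indicator F ((y + 3) / gb)
    + (Ici (4 / gb)).indicator F ((y + 4) / gb)

lemma comp_Tg_mul (g F : ℝ → ℝ≥0∞) (x : ℝ) :
    g (Tg x) * F x = g (gb * x - 0) * (Iio (3 / gb)).indicator F x
      + g (gb * x - 3) * (Ico (3 / gb) (4 / gb)).indicator F x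
      + g (gb * x - 4) * (Ici (4 / gb)).indicator F x := by
  have h34 : 3 / gb < 4 / gb := div_lt_div_of_pos_right (by norm_num) gb_pos
  rcases lt_or_ge x (3 / gb) with h3 | h3
  · simp [Tg, h3, not_le.2 (h3.trans h34)]
  rcases lt_or_ge x (4 / gb) with h4 | h4
  · simp [Tg, h3, h4, not_lt.2 h3, not_le.2 h4]
  · simp [Tg, h4, not_lt.2 h3, not_lt.2 h4]

lemma lintegral_comp_Tg_mul {g F : ℝ → ℝ≥0∞} (hg : Measurable g) (hF : Measurable F) :
    ∫⁻ x, g (Tg x) * F x = ENNReal.ofReal gb⁻¹ * ∫⁻ y, g y * transfer F y := by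
  have hF₀ := hF.indicator (measurableSet_Iio (a := 3 / gb))
  have hF₃ := hF.indicator (measurableSet_Ico (a := 3 / gb) (b := 4 / gb))
  have hF₄ := hF.indicator (measurableSet_Ici (a := 4 / gb))
  simp_rw [comp_Tg_mul, transfer, mul_add]
  rw [lintegral_add_left (by fun_prop), lintegral_add_left (by fun_prop),
    lintegral_add_left (by fun_prop), lintegral_add_left (by fun_prop),
    lintegral_comp_mul_sub_mul gb_pos.ne' 0 hg hF₀, lintegral_comp_mul_sub_mul gb_pos.ne' 3 hg hF₃,
    lintegral_comp_mul_sub_mul gb_pos.ne' 4 hg hF₄, abs_of_pos (inv_pos.2 gb_pos)]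
  simp only [add_zero, mul_add]

lemma setLIntegral_preimage_Tg {F : ℝ → ℝ≥0∞} (hF : Measurable F) {E : Set ℝ}
    (hE : MeasurableSet E) :
    ∫⁻ x in Tg ⁻¹' E, F x = ∫⁻ y in E, ENNReal.ofReal gb⁻¹ * transfer F y := by
  calc ∫⁻ x in Tg ⁻¹' E, F x = ∫⁻ x, E.indicator 1 (Tg x) * F x := by
        rw [← lintegral_indicator (measurable_Tg hE)]
        congr with x
        by_cases hx : Tg x ∈ E <;> simp [hx]
    _ = ENNReal.ofReal gb⁻¹ * ∫⁻ y, E.indicator 1 y * transfer F y :=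
        lintegral_comp_Tg_mul (measurable_one.indicator hE) hF
    _ = ∫⁻ y in E, ENNReal.ofReal gb⁻¹ * transfer F y := by
        rw [← lintegral_const_mul' _ _ ENNReal.ofReal_ne_top, ← lintegral_indicator hE]
        congr with y
        by_cases hy : y ∈ E <;> simp [hy]

lemma transfer_of_mem_Ico (F : ℝ → ℝ≥0∞) {y : ℝ} (hy : y ∈ Ico 0 3) :
    transfer F y = F (y / gb) + (if y < 1 then F ((y + 3) / gb) else 0) + F ((y + 4) / gb) := by
  obtain ⟨hy0, hy3⟩ := hy
  have hy1 : y + 3 < 4 ↔ y < 1 := ⟨fun h => by linarith, fun h => by linarith⟩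
  simp [transfer, indicator_apply, div_lt_div_iff_of_pos_right gb_pos,
    div_le_div_iff_of_pos_right gb_pos, hy0, hy1, hy3]

lemma ofReal_inv_gb_mul_transfer_psi {y : ℝ} (hy : y ∈ Ico 0 3) :
    ENNReal.ofReal gb⁻¹ * transfer (fun x => ENNReal.ofReal (psi x)) y
      = ENNReal.ofReal (psi y) := by
  have hite : 0 ≤ if y < 1 then psi ((y + 3) / gb) else 0 := by
    split_ifs
    exacts [psi_nonneg _, le_rfl]
  rw [transfer_of_mem_Ico _ hy, ← ENNReal.ofReal_zero, ← apply_ite ENNReal.ofReal,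
    ← ENNReal.ofReal_add (psi_nonneg _) hite,
    ← ENNReal.ofReal_add (add_nonneg (psi_nonneg _) hite) (psi_nonneg _),
    ← ENNReal.ofReal_mul (inv_nonneg.2 gb_pos.le), psi_transfer_eq hy.1 hy.2,
    inv_mul_cancel_left₀ gb_pos.ne']

/-- `ν` is a finite `T`-invariant measure: `ν(T⁻¹E) = ν(E)` for
every Borel `E ⊆ [0, 3)`. Hence, after normalization, `ν` is the absolutely
continuous invariant probability measure of `T`. -/
theorem stmt19 :
    IsFiniteMeasure nuMeas ∧
    ∀ E : Set ℝ, E ⊆ Set.Ico 0 3 → MeasurableSet E →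
      nuMeas (Tg ⁻¹' E) = nuMeas E := by
  refine ⟨isFiniteMeasure_withDensity_ofReal integrable_psi.2, fun E hE hEm => ?_⟩
  rw [nuMeas, withDensity_apply _ (measurable_Tg hEm), withDensity_apply _ hEm,
    setLIntegral_preimage_Tg measurable_psi.ennreal_ofReal hEm]
  exact setLIntegral_congr_fun hEm fun y hy => ofReal_inv_gb_mul_transfer_psi (hE hy)
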